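/- Suppose |M| = |W| = 2 and every woman's preference list is full (ranks all of M). Then for every profile q̄ ∈ P(M)^W, the M-optimal stable matching rule C^q̄ is OSP-implementable. -/

import Mathlib

/-- A preference list over `α` (a totally ordered subset of `α`), represented as a
duplicate-free list, most-preferred member first. Members of `α` not on the list
are unranked (unacceptable). -/
abbrev PrefList (α : Type) : Type := {l : List α // l.Nodup}

/-- `x ≻ y` according to `p`: `x` is ranked above `y` on `p`, or `x` appears on `p`
while `y` does not. -/
def prefers {α : Type} (p : PrefList α) (x y : α) : Prop :=
  [x, y].Sublist p.val ∨ (x ∈ p.val ∧ y ∉ p.val)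

/-- Strict preference over possible outcomes, where `none` means being unmatched:
being matched to someone on one's list is better than being unmatched, which is
better than being matched to someone not on one's list. -/
def outPrefers {α : Type} (p : PrefList α) : Option α → Option α → Prop
  | some x, some y => prefers p x y
  | some x, none => x ∈ p.val
  | none, some y => y ∉ p.val
  | none, none => False

/-- A preference list is full if it ranks every member of the opposite side. -/
def IsFull {α : Type} (p : PrefList α) : Prop := ∀ x : α, x ∈ p.val

/-- A matching between `M` and `W`: a one-to-one mapping between a subset of `M`
and a subset of `W`, recorded as a partial injective function from men to women
(`μ.toFun m = none` meaning that `m` is unmatched). -/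
structure Matching (M W : Type) where
  toFun : M → Option W
  inj : ∀ ⦃m m' : M⦄ ⦃w : W⦄, toFun m = some w → toFun m' = some w → m = m'

/-- Woman `w` strictly prefers man `m` (according to her list `q`) over the partner
matched to her by `μ` (or over remaining unmatched, if `μ` leaves her unmatched). -/
def womanPrefersOver {M W : Type} (q : PrefList M) (μ : Matching M W) (w : W) (m : M) : Prop :=
  (∃ m', μ.toFun m' = some w ∧ prefers q m m') ∨
    ((∀ m', μ.toFun m' ≠ some w) ∧ m ∈ q.val)

/-- `μ` is stable with respect to men's profile `pbar` and women's profile `qbar`: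
there is no man and woman each preferring the other over their match under `μ`, and
no participant is matched with a partner not on their preference list. -/
def IsStable {M W : Type} (pbar : M → PrefList W) (qbar : W → PrefList M)
    (μ : Matching M W) : Prop :=
  ¬ ((∃ m w, outPrefers (pbar m) (some w) (μ.toFun m) ∧ womanPrefersOver (qbar w) μ w m) ∨
     (∃ m w, μ.toFun m = some w ∧ (w ∉ (pbar m).val ∨ m ∉ (qbar w).val)))

/-- `C` is `qbar`-stable: `C pbar` is stable with respect to `pbar` and `qbar` for
every men's profile `pbar`. -/
def IsStableRule {M W : Type} (qbar : W → PrefList M)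
    (C : (M → PrefList W) → Matching M W) : Prop :=
  ∀ pbar, IsStable pbar qbar (C pbar)

/-- `C` is the `M`-optimal stable matching rule `C^qbar`: it maps each men's profile
`pbar` to a stable matching that every man weakly prefers to every stable matching. -/
def IsMOptimalStableRule {M W : Type} (qbar : W → PrefList M)
    (C : (M → PrefList W) → Matching M W) : Prop :=
  ∀ pbar, IsStable pbar qbar (C pbar) ∧
    ∀ μ, IsStable pbar qbar μ → ∀ m, ¬ outPrefers (pbar m) (μ.toFun m) ((C pbar).toFun m)

/-- `C` is strategy-proof for man `m`. -/
def StrategyProofFor {M W : Type} [DecidableEq M]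
    (C : (M → PrefList W) → Matching M W) (m : M) : Prop :=
  ∀ (pbar : M → PrefList W) (p' : PrefList W),
    ¬ outPrefers (pbar m) ((C (Function.update pbar m p')).toFun m) ((C pbar).toFun m)

/-- A women's profile `qbar` is cyclical if there are men `a`, `b`, `c` and women
`x`, `y` with `a ≻ₓ b ≻ₓ c ≻_y a`. -/
def Cyclical {M W : Type} (qbar : W → PrefList M) : Prop :=
  ∃ (a b c : M) (x y : W),
    prefers (qbar x) a b ∧ prefers (qbar x) b c ∧ prefers (qbar y) c a

/-- A one-side-querying extensive-form matching mechanism for `M` over `W`: a rooted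
tree each of whose leaves is labeled by a matching and each of whose internal nodes
queries a man; the edges out of an internal node querying `q` are the fibers of the
function `next` (two preference lists for `q` lie on the same outgoing edge iff they
are routed to the same subtree). -/
inductive Mech (M W : Type) : Type
  | leaf (μ : Matching M W)
  | node (q : M) (next : PrefList W → Mech M W)

/-- The matching rule implemented by a mechanism: route the profile from the root to
a leaf and output that leaf's matching. -/
def Mech.run {M W : Type} : Mech M W → (M → PrefList W) → Matching M W
  | .leaf μ, _ => μ
  | .node q next, pbar => (next (pbar q)).run pbar

/-- Auxiliary definition of obvious strategy-proofness for man `m`: `P` is the set of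
profiles passing through the current node. At each node querying `m`, for all profiles
`pbar`, `pbar'` passing through the node at which `m`'s lists diverge (are routed to
distinct subtrees), the outcome of `pbar'` is not strictly preferred (according to
`pbar m`) to the outcome of `pbar`. -/
def Mech.OSPAux {M W : Type} (m : M) : Mech M W → Set (M → PrefList W) → Prop
  | .leaf _, _ => True
  | .node q next, P =>
      (q = m → ∀ pbar ∈ P, ∀ pbar' ∈ P, next (pbar m) ≠ next (pbar' m) →
        ¬ outPrefers (pbar m) (((next (pbar' m)).run pbar').toFun m)
            (((next (pbar m)).run pbar).toFun m)) ∧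
      ∀ p : PrefList W, Mech.OSPAux m (next p) {pbar ∈ P | next (pbar q) = next p}

/-- `I` is obviously strategy-proof (OSP) for man `m`. -/
def Mech.OSPFor {M W : Type} (I : Mech M W) (m : M) : Prop :=
  Mech.OSPAux m I Set.univ

/-- A matching rule is OSP-implementable if it is implemented by some mechanism that
is OSP for every man. -/
def OSPImplementable {M W : Type} (C : (M → PrefList W) → Matching M W) : Prop :=
  ∃ I : Mech M W, (∀ m : M, I.OSPFor m) ∧ ∀ pbar, I.run pbar = C pbar

/-- A two-sides-querying extensive-form matching mechanism: internal nodes may query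
either a man (about his preference list over `W`) or a woman (about her preference
list over `M`). -/
inductive Mech2 (M W : Type) : Type
  | leaf (μ : Matching M W)
  | nodeM (q : M) (next : PrefList W → Mech2 M W)
  | nodeW (q : W) (next : PrefList M → Mech2 M W)

/-- The two-sides-querying matching rule implemented by a two-sides-querying mechanism. -/
def Mech2.run {M W : Type} :
    Mech2 M W → (M → PrefList W) → (W → PrefList M) → Matching M W
  | .leaf μ, _, _ => μ
  | .nodeM q next, pbar, qbar => (next (pbar q)).run pbar qbar
  | .nodeW q next, pbar, qbar => (next (qbar q)).run pbar qbar

/-- Auxiliary definition of obvious strategy-proofness of a two-sides-querying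
mechanism for man `m`; `P` is the set of two-sided profiles passing through the
current node. -/
def Mech2.OSPAux {M W : Type} (m : M) :
    Mech2 M W → Set ((M → PrefList W) × (W → PrefList M)) → Prop
  | .leaf _, _ => True
  | .nodeM q next, P =>
      (q = m → ∀ r ∈ P, ∀ r' ∈ P, next (r.1 m) ≠ next (r'.1 m) →
        ¬ outPrefers (r.1 m) (((next (r'.1 m)).run r'.1 r'.2).toFun m)
            (((next (r.1 m)).run r.1 r.2).toFun m)) ∧
      ∀ p : PrefList W, Mech2.OSPAux m (next p) {r ∈ P | next (r.1 q) = next p}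
  | .nodeW q next, P =>
      ∀ p : PrefList M, Mech2.OSPAux m (next p) {r ∈ P | next (r.2 q) = next p}

/-- A two-sides-querying mechanism `I` is obviously strategy-proof (OSP) for man `m`. -/
def Mech2.OSPForM {M W : Type} (I : Mech2 M W) (m : M) : Prop :=
  Mech2.OSPAux m I Set.univ

/-
With two men and women who rank every man, the men-optimal stable matching is the outcome of
deferred acceptance: each man proposes to his favourite woman, and if both propose to the same
woman she keeps the one she ranks first while the other gets his favourite among the remaining
women. So each man gets his favourite woman in a menu fixed by the other man's list alone: all
women except the one, if any, who heads the rival's list and ranks the rival first.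

The mechanism first asks `u` whether his favourite woman ranks `v` first. If not, `u` is sure to
get his favourite, so he reports his whole list and `v` then chooses from the menu `u` leaves him;
if so, `v` is sure to get his favourite and the roles swap. At the first question, the answer
"yes" leaves `u` a menu containing every woman that the answer "no" could give him.
-/

section Preferences

variable {α : Type}

theorem head_mem {p : PrefList α} {a : α} (h : p.val.head? = some a) : a ∈ p.val :=
  List.mem_of_mem_head? h

theorem prefers_irrefl (p : PrefList α) (a : α) : ¬ prefers p a a := by
  rintro (h | ⟨h, h'⟩)
  · simpa using p.2.sublist h
  · exact h' h

theorem prefers_of_head {p : PrefList α} {a b : α} (h : p.val.head? = some a) (hb : b ≠ a) :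
    prefers p a b := by
  obtain ⟨t, ht⟩ := List.head?_eq_some_iff.1 h
  by_cases hbp : b ∈ p.val
  · left
    rw [ht] at hbp ⊢
    exact List.cons_sublist_cons.2
      (List.singleton_sublist.2 ((List.mem_cons.1 hbp).resolve_left hb))
  · exact Or.inr ⟨head_mem h, hbp⟩

theorem not_prefers_head {p : PrefList α} {a : α} (h : p.val.head? = some a) (b : α) :
    ¬ prefers p b a := by
  obtain ⟨t, ht⟩ := List.head?_eq_some_iff.1 h
  have hat : a ∉ t := (List.nodup_cons.1 (ht ▸ p.2)).1
  rintro (hs | ⟨_, ha⟩)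
  · rw [ht] at hs
    cases hs with
    | cons _ hs => exact hat (hs.subset (by simp))
    | cons_cons _ hs => exact hat (hs.subset (by simp))
  · exact ha (head_mem h)

theorem not_outPrefers_head (p : PrefList α) (o : Option α) : ¬ outPrefers p o p.val.head? := by
  cases h : p.val.head? with
  | none =>
    rcases o with _ | w
    · exact id
    · intro hw
      have hw' : w ∈ p.val := hw
      simp [List.head?_eq_none_iff.1 h] at hw'
  | some a =>
    rcases o with _ | w
    · exact fun ha => ha (head_mem h)
    · exact not_prefers_head h w

theorem eq_head_of_not_outPrefers {p : PrefList α} {o : Option α}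
    (hfeas : ∀ w, o = some w → w ∈ p.val) (h : ¬ outPrefers p p.val.head? o) :
    o = p.val.head? := by
  cases hp : p.val.head? with
  | none =>
    rcases o with _ | w
    · rfl
    · simpa [List.head?_eq_none_iff.1 hp] using hfeas w rfl
  | some a =>
    rw [hp] at h
    rcases o with _ | w
    · exact absurd (head_mem hp) h
    · by_contra hwa
      exact h (prefers_of_head hp fun hw => hwa (hw ▸ rfl))

def IsBestIn (p : PrefList α) (S : Set α) (o : Option α) : Prop :=
  (∀ w, o = some w → w ∈ S ∧ w ∈ p.val) ∧ ∀ w ∈ S, ¬ outPrefers p (some w) o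

theorem isBestIn_head {p : PrefList α} {S : Set α}
    (hS : ∀ w, p.val.head? = some w → w ∈ S) : IsBestIn p S p.val.head? :=
  ⟨fun w hw => ⟨hS w hw, head_mem hw⟩, fun _ _ => not_outPrefers_head p _⟩

theorem IsBestIn.not_outPrefers {p : PrefList α} {S : Set α} {o o' : Option α}
    (h : IsBestIn p S o) (ho' : ∀ w, o' = some w → w ∈ S) : ¬ outPrefers p o' o := by
  rcases o' with _ | w
  · rcases o with _ | y
    · exact id
    · exact fun hy => hy (h.1 y rfl).2
  · exact h.2 w (ho' w rfl)

/-- Choosing from a menu that does not depend on one's report is strategy-proof. -/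
theorem IsBestIn.not_outPrefers_of_isBestIn {p p' : PrefList α} {S : Set α} {o o' : Option α}
    (h : IsBestIn p S o) (h' : IsBestIn p' S o') : ¬ outPrefers p o' o :=
  h.not_outPrefers fun w hw => (h'.1 w hw).1

end Preferences

section Stability

variable {M W : Type} {pbar : M → PrefList W} {qbar : W → PrefList M} {μ : Matching M W}

theorem IsStable.mem_of_toFun_eq (hS : IsStable pbar qbar μ) {m : M} {w : W}
    (h : μ.toFun m = some w) : w ∈ (pbar m).val ∧ m ∈ (qbar w).val := by
  by_contra hc
  exact hS (Or.inr ⟨m, w, h, not_and_or.1 hc⟩)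

theorem IsStable.exists_toFun_eq_of_outPrefers (hS : IsStable pbar qbar μ) {m : M} {w : W}
    (hout : outPrefers (pbar m) (some w) (μ.toFun m)) (hm : m ∈ (qbar w).val) :
    ∃ m', μ.toFun m' = some w := by
  by_contra h
  exact hS (Or.inl ⟨m, w, hout, Or.inr ⟨fun m' hm' => h ⟨m', hm'⟩, hm⟩⟩)

theorem IsStable.toFun_eq_of_head_eq (hS : IsStable pbar qbar μ) {m : M} {w : W}
    (hm : (pbar m).val.head? = some w) (hw : (qbar w).val.head? = some m) :
    μ.toFun m = some w := by
  by_contra hne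
  have hout : outPrefers (pbar m) (some w) (μ.toFun m) := by
    rw [← hm]
    by_contra h
    exact hne ((eq_head_of_not_outPrefers (fun _ h' => (hS.mem_of_toFun_eq h').1) h).trans hm)
  obtain ⟨m', hm'⟩ := hS.exists_toFun_eq_of_outPrefers hout (head_mem hw)
  have hm'm : m' ≠ m := by
    rintro rfl
    exact hne hm'
  exact hS (Or.inl ⟨m, w, hout, Or.inl ⟨m', hm', prefers_of_head hw hm'm⟩⟩)

def HeadsDistinct (pbar : M → PrefList W) : Prop :=
  ∀ m₁ m₂ w, (pbar m₁).val.head? = some w → (pbar m₂).val.head? = some w → m₁ = m₂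

def headsMatching (pbar : M → PrefList W) (h : HeadsDistinct pbar) : Matching M W :=
  ⟨fun m => (pbar m).val.head?, fun m₁ m₂ w => h m₁ m₂ w⟩

theorem isStable_headsMatching (hfull : ∀ w, IsFull (qbar w)) (h : HeadsDistinct pbar) :
    IsStable pbar qbar (headsMatching pbar h) := by
  rintro (⟨m, w, hout, _⟩ | ⟨m, w, hw, hbad | hbad⟩)
  · exact not_outPrefers_head _ _ hout
  · exact hbad (head_mem hw)
  · exact hbad (hfull w m)

theorem IsMOptimalStableRule.toFun_eq_head {C : (M → PrefList W) → Matching M W}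
    (hC : IsMOptimalStableRule qbar C) (hfull : ∀ w, IsFull (qbar w)) (h : HeadsDistinct pbar)
    (m : M) : (C pbar).toFun m = (pbar m).val.head? :=
  eq_head_of_not_outPrefers (fun _ hw => ((hC pbar).1.mem_of_toFun_eq hw).1)
    ((hC pbar).2 _ (isStable_headsMatching hfull h) m)

end Stability

section TwoMen

variable {M W : Type} {qbar : W → PrefList M} {C : (M → PrefList W) → Matching M W} {u v : M}

/-- If `p` is `m`'s list, this woman (if any) is matched to `m` in every stable matching. -/
def claimedBy (qbar : W → PrefList M) (m : M) (p : PrefList W) : Set W :=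
  {w | p.val.head? = some w ∧ (qbar w).val.head? = some m}

theorem IsFull.head_eq_or {q : PrefList M} (hq : IsFull q) (hM : ∀ m, m = u ∨ m = v) :
    q.val.head? = some u ∨ q.val.head? = some v := by
  cases h : q.val with
  | nil => simpa [h] using hq u
  | cons c t => rcases hM c with rfl | rfl <;> simp

theorem IsMOptimalStableRule.toFun_eq_head_of_head_eq (hC : IsMOptimalStableRule qbar C)
    (hfull : ∀ w, IsFull (qbar w)) (hM : ∀ m, m = u ∨ m = v) (pbar : M → PrefList W)
    (h : ∀ w, (pbar u).val.head? = some w → (pbar v).val.head? = some w →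
      (qbar w).val.head? = some u) :
    (C pbar).toFun u = (pbar u).val.head? := by
  by_cases hsame : ∃ w, (pbar u).val.head? = some w ∧ (pbar v).val.head? = some w
  · obtain ⟨w, hu, hv⟩ := hsame
    rw [hu]
    exact (hC pbar).1.toFun_eq_of_head_eq hu (h w hu hv)
  · refine hC.toFun_eq_head hfull (fun m₁ m₂ w h₁ h₂ => ?_) u
    rcases hM m₁ with rfl | rfl <;> rcases hM m₂ with rfl | rfl
    exacts [rfl, absurd ⟨w, h₁, h₂⟩ hsame, absurd ⟨w, h₂, h₁⟩ hsame, rfl]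

theorem IsMOptimalStableRule.isBestIn_toFun (hC : IsMOptimalStableRule qbar C)
    (hfull : ∀ w, IsFull (qbar w)) (huv : u ≠ v) (hM : ∀ m, m = u ∨ m = v)
    (pbar : M → PrefList W) :
    IsBestIn (pbar u) (claimedBy qbar v (pbar v))ᶜ ((C pbar).toFun u) := by
  have hS := (hC pbar).1
  rcases (claimedBy qbar v (pbar v)).eq_empty_or_nonempty with hnone | ⟨w, hwv, hw⟩
  · rw [hnone, Set.compl_empty, hC.toFun_eq_head_of_head_eq hfull hM pbar fun w _ hv =>
      ((hfull w).head_eq_or hM).resolve_right fun hw => hnone.subset ⟨hv, hw⟩]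
    exact isBestIn_head fun _ _ => Set.mem_univ _
  have hCv : (C pbar).toFun v = some w := hS.toFun_eq_of_head_eq hwv hw
  refine ⟨fun w' hw' => ⟨fun hclaim => huv ?_, (hS.mem_of_toFun_eq hw').1⟩,
    fun w' hw' hout => ?_⟩
  · rw [Option.some.inj (hclaim.1.symm.trans hwv)] at hw'
    exact (C pbar).inj hw' hCv
  · obtain ⟨m', hm'⟩ := hS.exists_toFun_eq_of_outPrefers hout (hfull w' u)
    rcases hM m' with rfl | rfl
    · rw [hm'] at hout
      exact prefers_irrefl _ _ hout
    · obtain rfl : w = w' := Option.some.inj (hCv.symm.trans hm')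
      exact hw' ⟨hwv, hw⟩

theorem IsMOptimalStableRule.toFun_eq_head_of_claimedBy_eq_empty
    (hC : IsMOptimalStableRule qbar C) (hfull : ∀ w, IsFull (qbar w))
    (hM : ∀ m, m = u ∨ m = v) {pbar : M → PrefList W} (h : claimedBy qbar v (pbar u) = ∅) :
    (C pbar).toFun u = (pbar u).val.head? :=
  hC.toFun_eq_head_of_head_eq hfull hM pbar fun w hu _ =>
    ((hfull w).head_eq_or hM).resolve_right fun hw => h.subset ⟨hu, hw⟩

theorem IsMOptimalStableRule.toFun_eq_head_of_claimedBy_nonempty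
    (hC : IsMOptimalStableRule qbar C) (hfull : ∀ w, IsFull (qbar w))
    (hM : ∀ m, m = u ∨ m = v) {pbar : M → PrefList W}
    (h : (claimedBy qbar v (pbar u)).Nonempty) :
    (C pbar).toFun v = (pbar v).val.head? :=
  hC.toFun_eq_head_of_head_eq hfull (fun m => (hM m).symm) pbar fun _ _ hu =>
    let ⟨_, hu', hw'⟩ := h
    Option.some.inj (hu'.symm.trans hu) ▸ hw'

theorem IsMOptimalStableRule.not_outPrefers_of_claimedBy_eq_empty
    (hC : IsMOptimalStableRule qbar C) (hfull : ∀ w, IsFull (qbar w)) (huv : u ≠ v)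
    (hM : ∀ m, m = u ∨ m = v) (pbar : M → PrefList W) {pbar' : M → PrefList W}
    (h : claimedBy qbar v (pbar' u) = ∅) :
    ¬ outPrefers (pbar u) ((C pbar').toFun u) ((C pbar).toFun u) := by
  rw [hC.toFun_eq_head_of_claimedBy_eq_empty hfull hM h]
  exact (hC.isBestIn_toFun hfull huv hM pbar).not_outPrefers fun w hw hclaim =>
    h.subset ⟨hw, hclaim.2⟩

end TwoMen

section Mechanisms

variable {M W : Type}

theorem Mech.ospAux_of_forall_not_outPrefers {m : M} (I : Mech M W) (P : Set (M → PrefList W))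
    (h : ∀ pbar ∈ P, ∀ pbar' ∈ P,
      ¬ outPrefers (pbar m) ((I.run pbar').toFun m) ((I.run pbar).toFun m)) :
    I.OSPAux m P := by
  induction I generalizing P with
  | leaf => trivial
  | node q next ih =>
    refine ⟨fun hqm pbar hp pbar' hp' _ => hqm ▸ h pbar hp pbar' hp', fun p => ih p _ ?_⟩
    rintro pbar ⟨hp, hpq⟩ pbar' ⟨hp', hpq'⟩
    have := h pbar hp pbar' hp'
    rwa [Mech.run, Mech.run, hpq, hpq'] at this

variable [DecidableEq M]

def pairProfile (u : M) (p q : PrefList W) : M → PrefList W := fun m => if m = u then p else q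

theorem pairProfile_apply_left (u : M) (p q : PrefList W) : pairProfile u p q u = p :=
  if_pos rfl

theorem pairProfile_apply_right {u v : M} (huv : u ≠ v) (p q : PrefList W) :
    pairProfile u p q v = q :=
  if_neg huv.symm

theorem pairProfile_eq {u v : M} (hM : ∀ m, m = u ∨ m = v) (pbar : M → PrefList W) :
    pairProfile u (pbar u) (pbar v) = pbar := by
  funext m
  by_cases h : m = u
  · rw [h, pairProfile_apply_left]
  · rw [pairProfile, if_neg h, (hM m).resolve_left h]

def askBoth (u v : M) (C : (M → PrefList W) → Matching M W) : Mech M W :=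
  .node u fun p => .node v fun q => .leaf (C (pairProfile u p q))

theorem askBoth_run {u v : M} (hM : ∀ m, m = u ∨ m = v)
    (C : (M → PrefList W) → Matching M W) (pbar : M → PrefList W) :
    (askBoth u v C).run pbar = C pbar :=
  congrArg C (pairProfile_eq hM pbar)

theorem askBoth_ne {u v : M} (huv : u ≠ v) (C : (M → PrefList W) → Matching M W) :
    askBoth v u C ≠ askBoth u v C := by
  intro h
  injection h with h
  exact huv h.symm

theorem ospAux_askBoth_right {u v : M} (huv : u ≠ v) {C : (M → PrefList W) → Matching M W}
    (hsp : ∀ p q q' : PrefList W,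
      ¬ outPrefers q ((C (pairProfile u p q')).toFun v) ((C (pairProfile u p q)).toFun v))
    (P : Set (M → PrefList W)) : (askBoth u v C).OSPAux v P :=
  ⟨fun h => absurd h huv, fun p =>
    Mech.ospAux_of_forall_not_outPrefers _ _ fun pbar _ pbar' _ => hsp p (pbar v) (pbar' v)⟩

end Mechanisms

section TwoMenMechanism

variable {M W : Type} [DecidableEq M] {qbar : W → PrefList M}
  {C : (M → PrefList W) → Matching M W} {u v : M}

theorem IsMOptimalStableRule.not_outPrefers_pairProfile (hC : IsMOptimalStableRule qbar C)
    (hfull : ∀ w, IsFull (qbar w)) (huv : u ≠ v) (hM : ∀ m, m = u ∨ m = v)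
    (p q q' : PrefList W) :
    ¬ outPrefers q ((C (pairProfile u p q')).toFun v) ((C (pairProfile u p q)).toFun v) := by
  have hbest := fun q =>
    hC.isBestIn_toFun hfull huv.symm (fun m => (hM m).symm) (pairProfile u p q)
  simp only [pairProfile_apply_left, pairProfile_apply_right huv] at hbest
  exact (hbest q).not_outPrefers_of_isBestIn (hbest q')

open Classical in
noncomputable def twoMenBranch (qbar : W → PrefList M) (u v : M)
    (C : (M → PrefList W) → Matching M W) (p : PrefList W) : Mech M W :=
  if (claimedBy qbar v p).Nonempty then askBoth v u C else askBoth u v C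

noncomputable def twoMenMech (qbar : W → PrefList M) (u v : M)
    (C : (M → PrefList W) → Matching M W) : Mech M W :=
  .node u (twoMenBranch qbar u v C)

theorem twoMenBranch_run (hM : ∀ m, m = u ∨ m = v) (p : PrefList W) (pbar : M → PrefList W) :
    (twoMenBranch qbar u v C p).run pbar = C pbar := by
  rw [twoMenBranch]
  split_ifs
  exacts [askBoth_run (fun m => (hM m).symm) C pbar, askBoth_run hM C pbar]

theorem twoMenMech_run (hM : ∀ m, m = u ∨ m = v) (pbar : M → PrefList W) :
    (twoMenMech qbar u v C).run pbar = C pbar :=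
  twoMenBranch_run hM _ pbar

theorem IsMOptimalStableRule.twoMenMech_ospFor_left (hC : IsMOptimalStableRule qbar C)
    (hfull : ∀ w, IsFull (qbar w)) (huv : u ≠ v) (hM : ∀ m, m = u ∨ m = v) :
    (twoMenMech qbar u v C).OSPFor u := by
  refine ⟨fun _ pbar _ pbar' _ hdiv => ?_, fun p => ?_⟩
  · rw [twoMenBranch_run hM, twoMenBranch_run hM]
    rcases (claimedBy qbar v (pbar' u)).eq_empty_or_nonempty with h' | h'
    · exact hC.not_outPrefers_of_claimedBy_eq_empty hfull huv hM pbar h'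
    have h : claimedBy qbar v (pbar u) = ∅ := Set.not_nonempty_iff_eq_empty.1 fun h =>
      hdiv (by rw [twoMenBranch, twoMenBranch, if_pos h, if_pos h'])
    rw [hC.toFun_eq_head_of_claimedBy_eq_empty hfull hM h]
    exact not_outPrefers_head _ _
  by_cases hp : (claimedBy qbar v p).Nonempty
  · have hb : twoMenBranch qbar u v C p = askBoth v u C := if_pos hp
    rw [hb]
    exact ospAux_askBoth_right huv.symm
      (hC.not_outPrefers_pairProfile hfull huv.symm fun m => (hM m).symm) _
  · have hb : twoMenBranch qbar u v C p = askBoth u v C := if_neg hp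
    rw [hb]
    refine Mech.ospAux_of_forall_not_outPrefers _ _ ?_
    rintro pbar ⟨-, hpbar⟩ pbar' -
    have h : claimedBy qbar v (pbar u) = ∅ := Set.not_nonempty_iff_eq_empty.1 fun h =>
      askBoth_ne huv C ((if_pos h).symm.trans hpbar)
    rw [askBoth_run hM, askBoth_run hM, hC.toFun_eq_head_of_claimedBy_eq_empty hfull hM h]
    exact not_outPrefers_head _ _

theorem IsMOptimalStableRule.twoMenMech_ospFor_right (hC : IsMOptimalStableRule qbar C)
    (hfull : ∀ w, IsFull (qbar w)) (huv : u ≠ v) (hM : ∀ m, m = u ∨ m = v) :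
    (twoMenMech qbar u v C).OSPFor v := by
  refine ⟨fun h => absurd h huv, fun p => ?_⟩
  by_cases hp : (claimedBy qbar v p).Nonempty
  · have hb : twoMenBranch qbar u v C p = askBoth v u C := if_pos hp
    rw [hb]
    refine Mech.ospAux_of_forall_not_outPrefers _ _ ?_
    rintro pbar ⟨-, hpbar⟩ pbar' -
    have h : (claimedBy qbar v (pbar u)).Nonempty := by
      by_contra h
      exact askBoth_ne huv C (hpbar.symm.trans (if_neg h))
    have hM' : ∀ m, m = v ∨ m = u := fun m => (hM m).symm
    rw [askBoth_run hM', askBoth_run hM', hC.toFun_eq_head_of_claimedBy_nonempty hfull hM h]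
    exact not_outPrefers_head _ _
  · have hb : twoMenBranch qbar u v C p = askBoth u v C := if_neg hp
    rw [hb]
    exact ospAux_askBoth_right huv (hC.not_outPrefers_pairProfile hfull huv hM) _

end TwoMenMechanism

theorem mOptimal_OSPImplementable_of_two_by_two_general
    {M W : Type} [Fintype M]
    (hM : Fintype.card M = 2)
    (qbar : W → PrefList M) (hfull : ∀ w : W, IsFull (qbar w))
    (C : (M → PrefList W) → Matching M W)
    (hC : IsMOptimalStableRule qbar C) :
    OSPImplementable C := by
  classical
  obtain ⟨u, v, huv, huniv⟩ := Nat.card_eq_two_iff.1 (Nat.card_eq_fintype_card.trans hM)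
  have hmen : ∀ m, m = u ∨ m = v := fun m => by simpa [← huniv] using Set.mem_univ m
  refine ⟨twoMenMech qbar u v C, fun m => ?_, twoMenMech_run hmen⟩
  rcases hmen m with rfl | rfl
  · exact hC.twoMenMech_ospFor_left hfull huv hmen
  · exact hC.twoMenMech_ospFor_right hfull huv hmen

/-- If `|M| = |W| = 2` and every woman's preference list is full, then
for every women's profile `qbar` the M-optimal stable matching rule is
OSP-implementable. -/
theorem mOptimal_OSPImplementable_of_two_by_two
    {M W : Type} [Fintype M] [Fintype W] [DecidableEq M]
    (hM : Fintype.card M = 2) (hW : Fintype.card W = 2)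
    (qbar : W → PrefList M) (hfull : ∀ w : W, IsFull (qbar w))
    (C : (M → PrefList W) → Matching M W)
    (hC : IsMOptimalStableRule qbar C) :
    OSPImplementable C :=
  mOptimal_OSPImplementable_of_two_by_two_general hM qbar hfull C hC
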